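/- In the Heisenberg group case (ℓ = 1, b = 1), the volume of the unit sub-Riemannian ball with respect to Lebesgue measure, computed via the formula V = ∫ over the optimal domain of the Jacobian of the exponential map, equals (1/12)(1 + 2π Si(2π)), where Si(x) = ∫_0^x (sin t)/t dt. -/

import Mathlib

/-!
The Jacobian of the exponential map is `r³ (2 - 2 cos w - w sin w) / w⁴`. Its numerator equals
`4 sin (w/2) (sin (w/2) - (w/2) cos (w/2))`, which is nonnegative for `|w| ≤ 2π` because
`u cos u ≤ sin u` on `[0, π]`; so the absolute value drops and the integral factors as
`∫₀¹ r³ dr · 2π · ∫_{-2π}^{2π} (2 - 2 cos w - w sin w) / w⁴ dw`. The last integrand has the odd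
primitive `(2 cos w - 2)/(3w³) + sin w/(6w²) + cos w/(6w) + Si(w)/6`, whose singular part is
`O(w)` at `0` by the Taylor bounds for `sin` and `cos`. Being a nonnegative derivative, the
integrand is integrable, and the fundamental theorem of calculus across `w = 0` gives
`2 (1/(12π) + Si(2π)/6)`.
-/

open Real MeasureTheory Set

/-- The sine integral `Si(x) = ∫₀ˣ sin t / t dt`. -/
noncomputable def Si (x : ℝ) : ℝ := ∫ t in Ioc (0:ℝ) x, sin t / t

/-- The sub-Riemannian exponential map (at time 1) of the Heisenberg group, in the
coordinates `(r, θ, w)` on the cotangent fiber. -/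
noncomputable def heisExp (p : ℝ × ℝ × ℝ) : ℝ × ℝ × ℝ :=
  (p.1 / p.2.2 * (cos (p.2.2 + p.2.1) - cos p.2.1),
   p.1 / p.2.2 * (sin (p.2.2 + p.2.1) - sin p.2.1),
   1 / (2 * p.2.2 ^ 2) * (p.2.2 * p.1 ^ 2 - p.1 ^ 2 * sin p.2.2))

open Filter Topology

def prodThreeEquivFun (R M : Type*) [Semiring R] [AddCommMonoid M] [Module R M] :
    (M × M × M) ≃ₗ[R] (Fin 3 → M) where
  toFun p := ![p.1, p.2.1, p.2.2]
  invFun v := (v 0, v 1, v 2)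
  map_add' p q := by funext i; fin_cases i <;> rfl
  map_smul' c p := by funext i; fin_cases i <;> rfl
  left_inv p := rfl
  right_inv v := by funext i; fin_cases i <;> rfl

theorem LinearMap.det_prod_three {R : Type*} [CommRing R] (f : (R × R × R) →ₗ[R] R × R × R) :
    f.det = Matrix.det !![(f (1, 0, 0)).1, (f (0, 1, 0)).1, (f (0, 0, 1)).1;
      (f (1, 0, 0)).2.1, (f (0, 1, 0)).2.1, (f (0, 0, 1)).2.1;
      (f (1, 0, 0)).2.2, (f (0, 1, 0)).2.2, (f (0, 0, 1)).2.2] := by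
  rw [← LinearMap.det_toMatrix (Module.Basis.ofEquivFun (prodThreeEquivFun R R))]
  congr 1
  ext i j
  fin_cases i <;> fin_cases j <;> rfl

noncomputable def heisJacobianFactor (w : ℝ) : ℝ := (2 - 2 * cos w - w * sin w) / w ^ 4

theorem det_fderiv_heisExp (p : ℝ × ℝ × ℝ) (hw : p.2.2 ≠ 0) :
    (fderiv ℝ heisExp p).det = p.1 ^ 3 * heisJacobianFactor p.2.2 := by
  obtain ⟨r, θ, w⟩ := p
  dsimp only at hw ⊢
  have hchord : (cos (w + θ) - cos θ) ^ 2 + (sin (w + θ) - sin θ) ^ 2 = 2 - 2 * cos w := by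
    simp only [cos_add, sin_add]
    linear_combination (cos w ^ 2 + sin w ^ 2 + 1 - 2 * cos w) * sin_sq_add_cos_sq θ
      + sin_sq_add_cos_sq w
  have hcross : (cos (w + θ) - cos θ) * sin (w + θ) - (sin (w + θ) - sin θ) * cos (w + θ)
      = -sin w := by
    have h := sin_sub θ (w + θ)
    rw [show θ - (w + θ) = -w by ring, sin_neg] at h
    linear_combination -h
  have hR : HasFDerivAt (fun q : ℝ × ℝ × ℝ => q.1) (ContinuousLinearMap.fst ℝ ℝ (ℝ × ℝ))
      (r, θ, w) := hasFDerivAt_fst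
  have hS : HasFDerivAt (fun q : ℝ × ℝ × ℝ => q.2) (ContinuousLinearMap.snd ℝ ℝ (ℝ × ℝ))
      (r, θ, w) := hasFDerivAt_snd
  have hT := (hasFDerivAt_fst (𝕜 := ℝ) (p := (θ, w))).comp (r, θ, w) hS
  have hW := (hasFDerivAt_snd (𝕜 := ℝ) (p := (θ, w))).comp (r, θ, w) hS
  have hdiv := hR.mul ((hasDerivAt_inv hw).comp_hasFDerivAt _ hW)
  have hsq := ((hdiv.pow 2).mul (hW.sub hW.sin)).mul_const (1 / 2 : ℝ)
  have hderiv := (hdiv.mul ((hW.add hT).cos.sub hT.cos)).prodMk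
    ((hdiv.mul ((hW.add hT).sin.sub hT.sin)).prodMk hsq)
  have heq : heisExp = fun q : ℝ × ℝ × ℝ => (q.1 * q.2.2⁻¹ * (cos (q.2.2 + q.2.1) - cos q.2.1),
      q.1 * q.2.2⁻¹ * (sin (q.2.2 + q.2.1) - sin q.2.1),
      (q.1 * q.2.2⁻¹) ^ 2 * (q.2.2 - sin q.2.2) * (1 / 2)) := by
    funext q; simp only [heisExp]; ring_nf
  simp only [Function.comp_def, Pi.mul_apply, Pi.sub_apply, Pi.add_apply] at hderiv
  rw [heq, hderiv.fderiv, ContinuousLinearMap.det, LinearMap.det_prod_three, Matrix.det_fin_three]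
  simp only [smul_add, neg_smul, smul_neg, one_div, Nat.add_one_sub_one, pow_one, nsmul_eq_mul,
    Nat.cast_ofNat, ContinuousLinearMap.coe_prod, ContinuousLinearMap.toLinearMap_add,
    ContinuousLinearMap.toLinearMap_smul, ContinuousLinearMap.toLinearMap_sub,
    ContinuousLinearMap.toLinearMap_neg, ContinuousLinearMap.toLinearMap_comp,
    ContinuousLinearMap.coe_snd, ContinuousLinearMap.coe_fst, sub_neg_eq_add, LinearMap.prod_apply,
    Function.prod_apply, LinearMap.add_apply, LinearMap.neg_apply, LinearMap.smul_apply,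
    LinearMap.coe_comp, LinearMap.coe_snd, Function.comp_apply, smul_eq_mul, mul_zero, neg_zero,
    LinearMap.coe_fst, add_zero, LinearMap.fst_apply, mul_one, zero_add, LinearMap.sub_apply,
    sub_self, sub_zero, Matrix.of_apply, Matrix.cons_val', Matrix.cons_val_zero,
    Matrix.cons_val_fin_one, Matrix.cons_val_one, Matrix.cons_val, heisJacobianFactor]
  -- Expand along the last row `(∂ᵣz, 0, ∂_w z)`: with `A, B` the chord coordinates, the two
  -- minors are `r² w⁻² ((A² + B²) / w + A sin (w + θ) - B cos (w + θ))` and `r w⁻² (A² + B²)`.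
  linear_combination (r * (w - sin w) * w⁻¹ ^ 2 * r ^ 2 * w⁻¹ ^ 3
      + (r ^ 2 * (1 - cos w) / 2 * w⁻¹ ^ 2 - r ^ 2 * (w - sin w) * w⁻¹ ^ 3) * r * w⁻¹ ^ 2) * hchord
    + r * (w - sin w) * w⁻¹ ^ 2 * r ^ 2 * w⁻¹ ^ 2 * hcross + r ^ 3 * w⁻¹ ^ 4 * sin_sq_add_cos_sq w

theorem mul_cos_le_sin {u : ℝ} (h0 : 0 ≤ u) (hπ : u ≤ π) : u * cos u ≤ sin u := by
  rcases lt_or_ge u (π / 2) with hu | hu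
  · have hcos : 0 < cos u := cos_pos_of_mem_Ioo ⟨by linarith, hu⟩
    have htan := le_tan h0 hu
    rwa [tan_eq_sin_div_cos, le_div_iff₀ hcos] at htan
  · have hcos : cos u ≤ 0 := cos_nonpos_of_pi_div_two_le_of_le hu (by linarith)
    nlinarith [sin_nonneg_of_nonneg_of_le_pi h0 hπ]

theorem two_sub_two_mul_cos_two_mul_sub (u : ℝ) :
    2 - 2 * cos (2 * u) - 2 * u * sin (2 * u) = 4 * sin u * (sin u - u * cos u) := by
  rw [cos_two_mul, sin_two_mul]
  linear_combination -4 * sin_sq_add_cos_sq u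

theorem heisJacobianFactor_nonneg {w : ℝ} (hw : |w| ≤ 2 * π) : 0 ≤ heisJacobianFactor w := by
  have heven : 2 - 2 * cos w - w * sin w = 2 - 2 * cos |w| - |w| * sin |w| := by
    rcases abs_cases w with ⟨h, -⟩ | ⟨h, -⟩ <;> rw [h]
    simp only [cos_neg, sin_neg, neg_mul_neg]
  obtain ⟨u, hu⟩ : ∃ u, |w| = 2 * u := ⟨|w| / 2, by ring⟩
  have hu0 : 0 ≤ u := by linarith [abs_nonneg w]
  have huπ : u ≤ π := by linarith
  rw [heisJacobianFactor, heven, hu, two_sub_two_mul_cos_two_mul_sub]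
  have hfactor := mul_cos_le_sin hu0 huπ
  have hsin := sin_nonneg_of_nonneg_of_le_pi hu0 huπ
  positivity

theorem Si_eq_integral_sinc {x : ℝ} (hx : 0 ≤ x) : Si x = ∫ t in 0..x, sinc t := by
  rw [intervalIntegral.integral_of_le hx]
  exact setIntegral_congr_fun measurableSet_Ioc fun t ht => (sinc_of_ne_zero ht.1.ne').symm

theorem integral_sinc_neg (x : ℝ) : ∫ t in 0..-x, sinc t = -∫ t in 0..x, sinc t := by
  rw [intervalIntegral.integral_symm, ← neg_zero, ← intervalIntegral.integral_comp_neg]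
  simp only [sinc_neg, neg_zero]

noncomputable def heisPrimitive (w : ℝ) : ℝ :=
  (2 * cos w - 2) / (3 * w ^ 3) + sin w / (6 * w ^ 2) + cos w / (6 * w) + (∫ t in 0..w, sinc t) / 6

theorem heisPrimitive_neg (w : ℝ) : heisPrimitive (-w) = -heisPrimitive w := by
  simp only [heisPrimitive, cos_neg, sin_neg, integral_sinc_neg]
  ring

theorem hasDerivAt_heisPrimitive {w : ℝ} (hw : w ≠ 0) :
    HasDerivAt heisPrimitive (heisJacobianFactor w) w := by
  have hcubic := (hasDerivAt_pow 3 w).const_mul 3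
  have hquad := (hasDerivAt_pow 2 w).const_mul 6
  have hlin := (hasDerivAt_id w).const_mul 6
  have hSi := (continuous_sinc.integral_hasStrictDerivAt 0 w).hasDerivAt.div_const 6
  have := (((((hasDerivAt_cos w).const_mul 2).sub_const 2).div hcubic (by positivity)).add
    ((hasDerivAt_sin w).div hquad (by positivity))).add
      ((hasDerivAt_cos w).div hlin (by positivity)) |>.add hSi
  refine this.congr_deriv ?_
  rw [heisJacobianFactor, sinc_of_ne_zero hw, id]
  field_simp
  ring

theorem abs_heisPrimitive_sub_integral_le {w : ℝ} (hw : |w| ≤ 1) :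
    |heisPrimitive w - (∫ t in 0..w, sinc t) / 6| ≤ |w| := by
  rcases eq_or_ne w 0 with rfl | hw0
  · simp [heisPrimitive]
  have hcos := cos_bound hw
  have hsin := sin_bound hw
  have heq : heisPrimitive w - (∫ t in 0..w, sinc t) / 6 =
      (-(2 / 3) * w ^ 4 + (4 + w ^ 2) * (cos w - (1 - w ^ 2 / 2))
        + w * (sin w - (w - w ^ 3 / 6))) / (6 * w ^ 3) := by
    rw [heisPrimitive]
    field_simp
    ring
  have hw2 : w ^ 2 ≤ 1 := by rw [← sq_abs]; nlinarith [abs_nonneg w]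
  have hw4 := pow_nonneg (abs_nonneg w) 4
  have hw5 : |w| ^ 5 ≤ |w| ^ 4 := pow_le_pow_of_le_one (abs_nonneg w) hw (by norm_num)
  rw [heq, abs_div, div_le_iff₀ (by positivity)]
  calc _ ≤ |-(2 / 3) * w ^ 4| + |(4 + w ^ 2) * (cos w - (1 - w ^ 2 / 2))|
          + |w * (sin w - (w - w ^ 3 / 6))| := abs_add_three _ _ _
    _ = 2 / 3 * |w| ^ 4 + (4 + w ^ 2) * |cos w - (1 - w ^ 2 / 2)|
          + |w| * |sin w - (w - w ^ 3 / 6)| := by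
        rw [abs_mul, abs_mul, abs_mul, abs_of_pos (by positivity : (0 : ℝ) < 4 + w ^ 2), pow_abs]
        norm_num
    _ ≤ 2 / 3 * |w| ^ 4 + 5 * (|w| ^ 4 * (5 / 96)) + 1 * (|w| ^ 5 / 100) := by
        gcongr; linarith
    _ ≤ 6 * |w| ^ 4 := by linarith
    _ = |w| * |6 * w ^ 3| := by rw [abs_mul, abs_pow, abs_of_pos (by norm_num : (0 : ℝ) < 6)]; ring

theorem continuous_heisPrimitive : Continuous heisPrimitive := by
  refine continuous_iff_continuousAt.2 fun w => ?_
  rcases eq_or_ne w 0 with rfl | hw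
  · have hD : Tendsto (fun w => heisPrimitive w - (∫ t in 0..w, sinc t) / 6) (𝓝 0) (𝓝 0) := by
      refine squeeze_zero_norm' ?_ (continuous_abs.tendsto' 0 0 abs_zero)
      filter_upwards [Metric.closedBall_mem_nhds (0 : ℝ) one_pos] with w hw
      exact abs_heisPrimitive_sub_integral_le (by simpa using hw)
    have hI : Continuous fun w => (∫ t in 0..w, sinc t) / 6 :=
      (intervalIntegral.continuous_primitive
        (fun _ _ => continuous_sinc.intervalIntegrable _ _) 0).div_const 6
    have h0 : heisPrimitive 0 = 0 := by simp [heisPrimitive]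
    simpa [ContinuousAt, h0] using hD.add (hI.tendsto 0)
  · exact (hasDerivAt_heisPrimitive hw).continuousAt

theorem intervalIntegrable_heisJacobianFactor {a b : ℝ} (hab : a ≤ b) (ha : -(2 * π) ≤ a)
    (hb : b ≤ 2 * π) (h0 : 0 ∉ Ioo a b) : IntervalIntegrable heisJacobianFactor volume a b := by
  have hne : ∀ x ∈ Ioo a b, x ≠ 0 := fun x hx h => h0 (h ▸ hx)
  refine (intervalIntegrable_iff_integrableOn_Ioc_of_le hab).2 <|
    intervalIntegral.integrableOn_deriv_of_nonneg continuous_heisPrimitive.continuousOn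
      (fun x hx => hasDerivAt_heisPrimitive (hne x hx)) fun x hx => ?_
  exact heisJacobianFactor_nonneg (abs_le.2 ⟨by linarith [hx.1], by linarith [hx.2]⟩)

theorem integral_heisJacobianFactor :
    ∫ w in -(2 * π)..2 * π, heisJacobianFactor w = 2 * heisPrimitive (2 * π) := by
  have hπ := pi_pos
  have hint : IntervalIntegrable heisJacobianFactor volume (-(2 * π)) (2 * π) :=
    (intervalIntegrable_heisJacobianFactor (by linarith) le_rfl (by linarith)
      fun h => h.2.false).trans
    (intervalIntegrable_heisJacobianFactor (by linarith) (by linarith) le_rfl fun h => h.1.false)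
  rw [integral_eq_of_hasDerivAt_off_countable_of_le _ _ (by linarith) (countable_singleton 0)
    continuous_heisPrimitive.continuousOn (fun x hx => hasDerivAt_heisPrimitive hx.2) hint,
    heisPrimitive_neg]
  ring

theorem heisPrimitive_two_pi : heisPrimitive (2 * π) = 1 / (12 * π) + Si (2 * π) / 6 := by
  rw [heisPrimitive, cos_two_pi, sin_two_pi, Si_eq_integral_sinc (by positivity)]
  field_simp
  ring

theorem abs_det_fderiv_heisExp {p : ℝ × ℝ × ℝ} (hr : 0 ≤ p.1) (hw : p.2.2 ≠ 0)
    (hw' : |p.2.2| ≤ 2 * π) : |(fderiv ℝ heisExp p).det| = p.1 ^ 3 * heisJacobianFactor p.2.2 := by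
  rw [det_fderiv_heisExp p hw,
    abs_of_nonneg (mul_nonneg (pow_nonneg hr 3) (heisJacobianFactor_nonneg hw'))]

/-- The Lebesgue volume of the unit sub-Riemannian ball of the Heisenberg group, computed
as the integral of the Jacobian of the exponential map over the optimal domain
`{0 ≤ r ≤ 1, 0 ≤ θ ≤ 2π, |w| ≤ 2π}`, equals `(1/12)(1 + 2π Si(2π))`. -/
theorem heisenberg_ball_volume :
    ∫ p in (Icc (0:ℝ) 1 ×ˢ Icc (0:ℝ) (2 * π) ×ˢ Icc (-(2 * π)) (2 * π)),
        |(fderiv ℝ heisExp p).det| =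
      1 / 12 * (1 + 2 * π * Si (2 * π)) := by
  have hπ := pi_pos
  have hw : ∀ᵐ p : ℝ × ℝ × ℝ, p.2.2 ≠ 0 :=
    (Measure.quasiMeasurePreserving_snd.comp Measure.quasiMeasurePreserving_snd).ae
      (Measure.ae_ne volume 0)
  calc
    _ = ∫ p in (Icc (0:ℝ) 1 ×ˢ Icc (0:ℝ) (2 * π) ×ˢ Icc (-(2 * π)) (2 * π)),
          p.1 ^ 3 * heisJacobianFactor p.2.2 := by
      refine setIntegral_congr_ae (by measurability) ?_
      filter_upwards [hw] with p hp hmem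
      exact abs_det_fderiv_heisExp hmem.1.1 hp (abs_le.2 hmem.2.2)
    _ = (∫ r in Icc (0:ℝ) 1, r ^ 3) * ((∫ θ in Icc (0:ℝ) (2 * π), (1:ℝ)) *
          ∫ w in Icc (-(2 * π)) (2 * π), heisJacobianFactor w) := by
      rw [Measure.volume_eq_prod, setIntegral_prod_mul (fun r : ℝ => r ^ 3)
        (fun q : ℝ × ℝ => heisJacobianFactor q.2), Measure.volume_eq_prod,
        ← setIntegral_prod_mul (fun _ : ℝ => (1:ℝ)) heisJacobianFactor]
      simp only [one_mul]
    _ = 1 / 4 * (2 * π * (2 * heisPrimitive (2 * π))) := by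
      simp only [integral_Icc_eq_integral_Ioc, ← intervalIntegral.integral_of_le zero_le_one,
        ← intervalIntegral.integral_of_le (by linarith : -(2 * π) ≤ 2 * π), integral_pow,
        integral_heisJacobianFactor, setIntegral_const, Real.volume_real_Icc]
      rw [max_eq_left (by linarith)]
      norm_num
    _ = 1 / 12 * (1 + 2 * π * Si (2 * π)) := by
      rw [heisPrimitive_two_pi]
      field_simp
      ring
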